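/- arXiv:2410.14802 — 2 statements merged into one kernel-verified Lean document; each statement's English description precedes it below -/
import Mathlib

section
/- Let x : ℝ → ℝ^{d₁} and y : ℝ → ℝ^{d₂} be differentiable curves and let G : ℝ → Matrix (Fin d₁) (Fin d₂) ℝ be any function such that for every t one has ‖G(t)·y(t)‖² + ‖G(t)ᵀ·x(t)‖² > 0 and the derivatives satisfy x'(t) = −(G(t)·y(t)) / √(‖G(t)·y(t)‖² + ‖G(t)ᵀ·x(t)‖²) and y'(t) = −(G(t)ᵀ·x(t)) / √(‖G(t)·y(t)‖² + ‖G(t)ᵀ·x(t)‖²). Then ‖x(t)‖² − ‖y(t)‖² is constant in t. -/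
/-!
Along the flow, `d/dt ‖x‖² = -2c ⟪x, G y⟫` and `d/dt ‖y‖² = -2c ⟪y, Gᵀ x⟫` with the same
normalizing factor `c`, and the two inner products agree because `Gᵀ` is the adjoint of `G`.
-/

open scoped RealInnerProductSpace Matrix

/-- Matrix–vector product as a map between Euclidean spaces. -/
noncomputable def mv {d₁ d₂ : ℕ} (A : Matrix (Fin d₁) (Fin d₂) ℝ)
    (v : EuclideanSpace ℝ (Fin d₂)) : EuclideanSpace ℝ (Fin d₁) :=
  WithLp.toLp 2 (A.mulVec v)

theorem inner_mv_left {d₁ d₂ : ℕ} (A : Matrix (Fin d₁) (Fin d₂) ℝ)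
    (v : EuclideanSpace ℝ (Fin d₂)) (u : EuclideanSpace ℝ (Fin d₁)) :
    ⟪mv A v, u⟫ = ⟪v, mv Aᵀ u⟫ := by
  simp only [mv, EuclideanSpace.inner_eq_star_dotProduct, star_trivial, Matrix.mulVec_transpose,
    Matrix.dotProduct_mulVec, dotProduct_comm]

theorem norm_sq_sub_norm_sq_eq_of_inner_deriv_eq {E F : Type*}
    [NormedAddCommGroup E] [InnerProductSpace ℝ E] [NormedAddCommGroup F] [InnerProductSpace ℝ F]
    {x : ℝ → E} {y : ℝ → F} {x' : ℝ → E} {y' : ℝ → F}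
    (hx : ∀ t, HasDerivAt x (x' t) t) (hy : ∀ t, HasDerivAt y (y' t) t)
    (h : ∀ t, ⟪x t, x' t⟫ = ⟪y t, y' t⟫) (s t : ℝ) :
    ‖x s‖ ^ 2 - ‖y s‖ ^ 2 = ‖x t‖ ^ 2 - ‖y t‖ ^ 2 := by
  have hderiv : ∀ t, HasDerivAt (fun t => ‖x t‖ ^ 2 - ‖y t‖ ^ 2) 0 t := fun t => by
    have hsub := (hx t).norm_sq.sub (hy t).norm_sq
    rwa [h t, sub_self] at hsub
  exact is_const_of_deriv_eq_zero (fun t => (hderiv t).differentiableAt)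
    (fun t => (hderiv t).deriv) s t

theorem sngd_nop_balancedness_conserved_general {d₁ d₂ : ℕ}
    (x : ℝ → EuclideanSpace ℝ (Fin d₁)) (y : ℝ → EuclideanSpace ℝ (Fin d₂))
    (G : ℝ → Matrix (Fin d₁) (Fin d₂) ℝ)
    (hx : ∀ t, HasDerivAt x
      (-((Real.sqrt (‖mv (G t) (y t)‖ ^ 2 + ‖mv (G t)ᵀ (x t)‖ ^ 2))⁻¹ • mv (G t) (y t))) t)
    (hy : ∀ t, HasDerivAt y
      (-((Real.sqrt (‖mv (G t) (y t)‖ ^ 2 + ‖mv (G t)ᵀ (x t)‖ ^ 2))⁻¹ • mv (G t)ᵀ (x t))) t) :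
    ∀ s t : ℝ, ‖x s‖ ^ 2 - ‖y s‖ ^ 2 = ‖x t‖ ^ 2 - ‖y t‖ ^ 2 := by
  refine norm_sq_sub_norm_sq_eq_of_inner_deriv_eq hx hy fun t => ?_
  rw [inner_neg_right, inner_neg_right, real_inner_smul_right, real_inner_smul_right,
    real_inner_comm (mv (G t) (y t)) (x t), inner_mv_left]

/-- SNGD gradient flow on the non-overparametrized problem conserves balancedness. -/
theorem sngd_nop_balancedness_conserved {d₁ d₂ : ℕ}
    (x : ℝ → EuclideanSpace ℝ (Fin d₁)) (y : ℝ → EuclideanSpace ℝ (Fin d₂))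
    (G : ℝ → Matrix (Fin d₁) (Fin d₂) ℝ)
    (hpos : ∀ t, 0 < ‖mv (G t) (y t)‖ ^ 2 + ‖mv (G t)ᵀ (x t)‖ ^ 2)
    (hx : ∀ t, HasDerivAt x
      (-((Real.sqrt (‖mv (G t) (y t)‖ ^ 2 + ‖mv (G t)ᵀ (x t)‖ ^ 2))⁻¹ • mv (G t) (y t))) t)
    (hy : ∀ t, HasDerivAt y
      (-((Real.sqrt (‖mv (G t) (y t)‖ ^ 2 + ‖mv (G t)ᵀ (x t)‖ ^ 2))⁻¹ • mv (G t)ᵀ (x t))) t) :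
    ∀ s t : ℝ, ‖x s‖ ^ 2 - ‖y s‖ ^ 2 = ‖x t‖ ^ 2 - ‖y t‖ ^ 2 :=
  sngd_nop_balancedness_conserved_general x y G hx hy
end

section
/- Let ρ ∈ ℝ, let D ≥ 1, and for each layer l ∈ Fin D let x_l : ℝ → ℝ^{d₁} and y_l : ℝ → ℝ^{d₂} be differentiable curves, G_l, G̃_l : ℝ → Matrix (Fin d₁) (Fin d₂) ℝ arbitrary matrix-valued functions, and u : ℝ → ℝ an arbitrary scalar function, such that for every t and every l the derivatives satisfy x_l'(t) = −G̃_l(t)·(y_l(t) + ρ u(t) • (G_l(t)ᵀ·x_l(t))) and y_l'(t) = −G̃_l(t)ᵀ·(x_l(t) + ρ u(t) • (G_l(t)·y_l(t))). Then for every l and t, the derivative of the per-layer balancedness B_l(t) := ½(‖x_l(t)‖² − ‖y_l(t)‖²) equals ρ u(t)(‖G_l(t)·y_l(t)‖² − ‖G_l(t)ᵀ·x_l(t)‖²) + ρ u(t)(⟪(G̃_l(t) − G_l(t))·y_l(t), G_l(t)·y_l(t)⟫ − ⟪(G̃_l(t) − G_l(t))ᵀ·x_l(t), G_l(t)ᵀ·x_l(t)⟫),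 and consequently the total balancedness B(t) := ∑_l B_l(t) has derivative equal to the sum over l of these expressions. -/
/-!
Along the flow, `d/dt ½(‖x‖² - ‖y‖²) = ⟪x, ẋ⟫ - ⟪y, ẏ⟫`. The adjoint relation
`⟪x, G̃ y⟫ = ⟪G̃ᵀ x, y⟫` cancels the terms without `ρ`, leaving
`ρ u (⟪G̃ y, G y⟫ - ⟪G̃ᵀ x, Gᵀ x⟫)`, which splits as claimed once `G̃ = G + (G̃ - G)`.
-/

open scoped RealInnerProductSpace Matrix

theorem mv_eq_toEuclideanLin {d₁ d₂ : ℕ} (A : Matrix (Fin d₁) (Fin d₂) ℝ)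
    (v : EuclideanSpace ℝ (Fin d₂)) : mv A v = Matrix.toEuclideanLin A v :=
  rfl

theorem mv_transpose {d₁ d₂ : ℕ} (A : Matrix (Fin d₁) (Fin d₂) ℝ)
    (v : EuclideanSpace ℝ (Fin d₁)) :
    mv Aᵀ v = LinearMap.adjoint (Matrix.toEuclideanLin A) v := by
  rw [← Matrix.toEuclideanLin_conjTranspose_eq_adjoint,
    Matrix.conjTranspose_eq_transpose_of_trivial]
  rfl

section

variable {E F : Type*} [NormedAddCommGroup E] [InnerProductSpace ℝ E]
  [NormedAddCommGroup F] [InnerProductSpace ℝ F]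

theorem HasDerivAt.half_mul_norm_sq_sub_norm_sq {x : ℝ → E} {y : ℝ → F} {x' : E} {y' : F}
    {t : ℝ} (hx : HasDerivAt x x' t) (hy : HasDerivAt y y' t) :
    HasDerivAt (fun s => (1 / 2 : ℝ) * (‖x s‖ ^ 2 - ‖y s‖ ^ 2)) (⟪x t, x'⟫ - ⟪y t, y'⟫) t :=
  ((hx.norm_sq.sub hy.norm_sq).const_mul (1 / 2 : ℝ)).congr_deriv (by ring)

variable [FiniteDimensional ℝ E] [FiniteDimensional ℝ F]

open LinearMap

theorem inner_sam_velocity_sub_inner (A B : F →ₗ[ℝ] E) (c : ℝ) (x : E) (y : F) :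
    ⟪x, -A (y + c • adjoint B x)⟫ - ⟪y, -adjoint A (x + c • B y)⟫ =
      c * (‖B y‖ ^ 2 - ‖adjoint B x‖ ^ 2)
        + c * (⟪(A - B) y, B y⟫ - ⟪adjoint (A - B) x, adjoint B x⟫) := by
  have hAy : ⟪y, adjoint A x⟫ = ⟪x, A y⟫ := by rw [adjoint_inner_right, real_inner_comm]
  have hAB : ⟪x, A (adjoint B x)⟫ = ⟪adjoint A x, adjoint B x⟫ := (adjoint_inner_left ..).symm
  have hBA : ⟪y, adjoint A (B y)⟫ = ⟪A y, B y⟫ := adjoint_inner_right ..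
  simp only [map_add, map_smul, map_sub, LinearMap.sub_apply, inner_neg_right, inner_add_right,
    real_inner_smul_right, inner_sub_left, hAy, hAB, hBA, ← real_inner_self_eq_norm_sq]
  ring

theorem hasDerivAt_balancedness_of_sam_flow {x : ℝ → E} {y : ℝ → F} {t : ℝ}
    (A B : F →ₗ[ℝ] E) (c : ℝ)
    (hx : HasDerivAt x (-A (y t + c • adjoint B (x t))) t)
    (hy : HasDerivAt y (-adjoint A (x t + c • B (y t))) t) :
    HasDerivAt (fun s => (1 / 2 : ℝ) * (‖x s‖ ^ 2 - ‖y s‖ ^ 2))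
      (c * (‖B (y t)‖ ^ 2 - ‖adjoint B (x t)‖ ^ 2)
        + c * (⟪(A - B) (y t), B (y t)⟫ - ⟪adjoint (A - B) (x t), adjoint B (x t)⟫)) t := by
  rw [← inner_sam_velocity_sub_inner]
  exact hx.half_mul_norm_sq_sub_norm_sq hy

end

theorem hasDerivAt_balancedness_of_sam_flow_mv {d₁ d₂ : ℕ} {x : ℝ → EuclideanSpace ℝ (Fin d₁)}
    {y : ℝ → EuclideanSpace ℝ (Fin d₂)} {t : ℝ} (G G' : Matrix (Fin d₁) (Fin d₂) ℝ) (c : ℝ)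
    (hx : HasDerivAt x (-(mv G' (y t + c • mv Gᵀ (x t)))) t)
    (hy : HasDerivAt y (-(mv G'ᵀ (x t + c • mv G (y t)))) t) :
    HasDerivAt (fun s => (1 / 2 : ℝ) * (‖x s‖ ^ 2 - ‖y s‖ ^ 2))
      (c * (‖mv G (y t)‖ ^ 2 - ‖mv Gᵀ (x t)‖ ^ 2)
        + c * (⟪mv (G' - G) (y t), mv G (y t)⟫ - ⟪mv (G' - G)ᵀ (x t), mv Gᵀ (x t)⟫)) t := by
  have hsub : Matrix.toEuclideanLin (G' - G) = Matrix.toEuclideanLin G' - Matrix.toEuclideanLin G :=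
    map_sub ..
  simp only [mv_transpose] at hx hy ⊢
  simp only [mv_eq_toEuclideanLin, hsub] at hx hy ⊢
  exact hasDerivAt_balancedness_of_sam_flow _ _ _ hx hy

theorem sam_nop_multilayer_balancedness_dynamics_general {d₁ d₂ D : ℕ} (ρ : ℝ)
    (x : Fin D → ℝ → EuclideanSpace ℝ (Fin d₁))
    (y : Fin D → ℝ → EuclideanSpace ℝ (Fin d₂))
    (G G' : Fin D → ℝ → Matrix (Fin d₁) (Fin d₂) ℝ) (u : ℝ → ℝ)
    (hx : ∀ t, ∀ l, HasDerivAt (x l)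
      (-(mv (G' l t) (y l t + (ρ * u t) • mv (G l t)ᵀ (x l t)))) t)
    (hy : ∀ t, ∀ l, HasDerivAt (y l)
      (-(mv (G' l t)ᵀ (x l t + (ρ * u t) • mv (G l t) (y l t)))) t) :
    (∀ l, ∀ t, HasDerivAt (fun s => (1 / 2 : ℝ) * (‖x l s‖ ^ 2 - ‖y l s‖ ^ 2))
      (ρ * u t * (‖mv (G l t) (y l t)‖ ^ 2 - ‖mv (G l t)ᵀ (x l t)‖ ^ 2)
        + ρ * u t * (⟪mv (G' l t - G l t) (y l t), mv (G l t) (y l t)⟫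
            - ⟪mv (G' l t - G l t)ᵀ (x l t), mv (G l t)ᵀ (x l t)⟫)) t) ∧
    (∀ t, HasDerivAt
      (fun s => ∑ l : Fin D, (1 / 2 : ℝ) * (‖x l s‖ ^ 2 - ‖y l s‖ ^ 2))
      (∑ l : Fin D,
        (ρ * u t * (‖mv (G l t) (y l t)‖ ^ 2 - ‖mv (G l t)ᵀ (x l t)‖ ^ 2)
          + ρ * u t * (⟪mv (G' l t - G l t) (y l t), mv (G l t) (y l t)⟫
              - ⟪mv (G' l t - G l t)ᵀ (x l t), mv (G l t)ᵀ (x l t)⟫))) t) := by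
  have layer := fun l t => hasDerivAt_balancedness_of_sam_flow_mv _ _ _ (hx t l) (hy t l)
  exact ⟨layer, fun t => HasDerivAt.fun_sum fun l _ => layer l t⟩

/-- Multi-layer (LoRA) extension of SAM's balancedness dynamics on the
non-overparametrized problem: per-layer and total balancedness dynamics. -/
theorem sam_nop_multilayer_balancedness_dynamics {d₁ d₂ D : ℕ} (hD : 1 ≤ D) (ρ : ℝ)
    (x : Fin D → ℝ → EuclideanSpace ℝ (Fin d₁))
    (y : Fin D → ℝ → EuclideanSpace ℝ (Fin d₂))
    (G G' : Fin D → ℝ → Matrix (Fin d₁) (Fin d₂) ℝ) (u : ℝ → ℝ)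
    (hx : ∀ t, ∀ l, HasDerivAt (x l)
      (-(mv (G' l t) (y l t + (ρ * u t) • mv (G l t)ᵀ (x l t)))) t)
    (hy : ∀ t, ∀ l, HasDerivAt (y l)
      (-(mv (G' l t)ᵀ (x l t + (ρ * u t) • mv (G l t) (y l t)))) t) :
    (∀ l, ∀ t, HasDerivAt (fun s => (1 / 2 : ℝ) * (‖x l s‖ ^ 2 - ‖y l s‖ ^ 2))
      (ρ * u t * (‖mv (G l t) (y l t)‖ ^ 2 - ‖mv (G l t)ᵀ (x l t)‖ ^ 2)
        + ρ * u t * (⟪mv (G' l t - G l t) (y l t), mv (G l t) (y l t)⟫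
            - ⟪mv (G' l t - G l t)ᵀ (x l t), mv (G l t)ᵀ (x l t)⟫)) t) ∧
    (∀ t, HasDerivAt
      (fun s => ∑ l : Fin D, (1 / 2 : ℝ) * (‖x l s‖ ^ 2 - ‖y l s‖ ^ 2))
      (∑ l : Fin D,
        (ρ * u t * (‖mv (G l t) (y l t)‖ ^ 2 - ‖mv (G l t)ᵀ (x l t)‖ ^ 2)
          + ρ * u t * (⟪mv (G' l t - G l t) (y l t), mv (G l t) (y l t)⟫
              - ⟪mv (G' l t - G l t)ᵀ (x l t), mv (G l t)ᵀ (x l t)⟫))) t) :=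
  sam_nop_multilayer_balancedness_dynamics_general ρ x y G G' u hx hy
end
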